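/- arXiv:2207.02808 — 2 statements merged into one kernel-verified Lean document; each statement's English description precedes it below -/
import Mathlib

section
/- Let α ∈ (0,1) and let s₁, …, s_{n}, s_{n+1} be exchangeable real-valued random variables (e.g., i.i.d.). Define q̂ to be the ⌈(n+1)(1−α)⌉-th smallest value among s₁, …, s_n (with q̂ = +∞ if ⌈(n+1)(1−α)⌉ > n). Then P(s_{n+1} ≤ q̂) ≥ 1 − α. -/
/-!
Let `R i = #{j | s j < s i}` be the strict rank of the `i`-th score and `k = ⌈(n+1)(1-α)⌉`.
Pointwise, at least `k` indices have `R i < k` (all those whose score is at most the `k`-th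
smallest one), so integrating the indicators gives `k ≤ ∑ i, P(R i < k)`. Exchangeability makes
the `n + 1` summands equal, hence `P(R (n+1) < k) ≥ k / (n+1) ≥ 1 - α`. Finally, `s (n+1) ≤ q̂`
holds exactly when fewer than `k` calibration scores lie strictly below `s (n+1)`.
-/

open MeasureTheory

/-- The `k`-th smallest element (1-indexed) of a multiset of reals. -/
noncomputable def kthSmallest (m : Multiset ℝ) (k : ℕ) : ℝ :=
  (m.sort (· ≤ ·)).getD (k - 1) 0

open Finset

theorem List.Pairwise.getElem_iff_lt_countP {α : Type*} {r : α → α → Prop} {p : α → Prop}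
    [DecidablePred p] {l : List α} (hl : l.Pairwise r) (hp : ∀ a b, r a b → p b → p a)
    {i : ℕ} (hi : i < l.length) : p l[i] ↔ i < l.countP p := by
  induction l generalizing i with
  | nil => simp at hi
  | cons a t ih =>
    obtain ⟨hat, ht⟩ := List.pairwise_cons.1 hl
    by_cases ha : p a
    · rw [List.countP_cons_of_pos (by simpa using ha)]
      cases i with
      | zero => simpa using ha
      | succ i =>
        rw [List.getElem_cons_succ, ih ht (by simpa using hi)]
        omega
    · have hnone : ∀ b ∈ a :: t, ¬ p b := by
        rintro b (_ | ⟨_, hb⟩)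
        exacts [ha, fun hpb => ha (hp a b (hat b hb) hpb)]
      rw [List.countP_eq_zero.2 (by simpa using hnone)]
      simpa using hnone _ (List.getElem_mem hi)

lemma kthSmallest_iff_lt_countP {m : Multiset ℝ} {k : ℕ} (hk : k - 1 < Multiset.card m)
    {p : ℝ → Prop} [DecidablePred p] (hp : IsLowerSet {a | p a}) :
    p (kthSmallest m k) ↔ k - 1 < m.countP p := by
  have hl : k - 1 < (m.sort (· ≤ ·)).length := by rwa [Multiset.length_sort]
  rw [kthSmallest, List.getD_eq_getElem _ _ hl,
    (Multiset.pairwise_sort m _).getElem_iff_lt_countP (p := p) (fun _ _ hab hb => hp hab hb) hl,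
    ← Multiset.coe_countP, Multiset.sort_eq]

lemma le_kthSmallest_iff {m : Multiset ℝ} {k : ℕ} (hk₁ : 1 ≤ k) (hk : k ≤ Multiset.card m)
    (x : ℝ) : x ≤ kthSmallest m k ↔ m.countP (· < x) < k := by
  rw [← not_lt, kthSmallest_iff_lt_countP (by omega) (isLowerSet_Iio x)]
  omega

lemma le_countP_le_kthSmallest {m : Multiset ℝ} {k : ℕ} (hk₁ : 1 ≤ k) (hk : k ≤ Multiset.card m) :
    k ≤ m.countP (· ≤ kthSmallest m k) := by
  have := (kthSmallest_iff_lt_countP (by omega) (isLowerSet_Iic (kthSmallest m k))).1 le_rfl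
  omega

lemma Multiset.countP_map_univ {ι α : Type*} [Fintype ι] (f : ι → α) (p : α → Prop)
    [DecidablePred p] : (univ.val.map f).countP p = #{i | p (f i)} := by
  rw [Multiset.countP_map]
  rfl

section StrictRank

variable {ι α : Type*} [Fintype ι] [LinearOrder α]

def strictRank (x : ι → α) (i : ι) : ℕ := #{j | x j < x i}

lemma strictRank_comp_perm (x : ι → α) (σ : Equiv.Perm ι) (i : ι) :
    strictRank (x ∘ σ) i = strictRank x (σ i) := by
  simp only [strictRank, card_filter, Function.comp_apply]
  exact Equiv.sum_comp σ fun j => if x j < x (σ i) then 1 else 0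

lemma countP_map_castSucc_lt_last {n : ℕ} (x : Fin (n + 1) → α) :
    (univ.val.map fun i : Fin n => x i.castSucc).countP (· < x (Fin.last n)) =
      strictRank x (Fin.last n) := by
  rw [Multiset.countP_map_univ, strictRank, card_filter, card_filter, Fin.sum_univ_castSucc]
  simp

lemma le_card_strictRank_lt (x : ι → ℝ) {k : ℕ} (hk₁ : 1 ≤ k) (hk : k ≤ Fintype.card ι) :
    k ≤ #{i | strictRank x i < k} := by
  set m := univ.val.map x
  have hm : k ≤ Multiset.card m := by simpa [m] using hk
  have hle := le_countP_le_kthSmallest hk₁ hm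
  have hlt := (le_kthSmallest_iff hk₁ hm (kthSmallest m k)).1 le_rfl
  rw [Multiset.countP_map_univ] at hle hlt
  refine hle.trans (card_le_card fun i hi => ?_)
  simp only [mem_filter, mem_univ, true_and] at hi ⊢
  refine (card_le_card fun j => ?_).trans_lt hlt
  simp only [mem_filter, mem_univ, true_and]
  exact fun hj => hj.trans_le hi

lemma measurable_strictRank (i : ι) : Measurable fun x : ι → ℝ => strictRank x i := by
  simp only [strictRank, card_filter]
  exact Finset.measurable_sum _ fun j _ => Measurable.ite
    (measurableSet_lt (measurable_pi_apply j) (measurable_pi_apply i))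
    measurable_const measurable_const

end StrictRank

lemma le_sum_measure_of_le_card {ι Ω : Type*} [MeasurableSpace Ω] (μ : Measure Ω)
    {s : Finset ι} {t : ι → Set Ω} [∀ i, DecidablePred (· ∈ t i)]
    (ht : ∀ i ∈ s, NullMeasurableSet (t i) μ) {k : ℕ} (hk : ∀ ω, k ≤ #{i ∈ s | ω ∈ t i}) :
    k * μ Set.univ ≤ ∑ i ∈ s, μ (t i) := by
  calc (k : ENNReal) * μ Set.univ = ∫⁻ _, (k : ENNReal) ∂μ := by rw [lintegral_const, mul_comm]
    _ ≤ ∫⁻ ω, ∑ i ∈ s, (t i).indicator 1 ω ∂μ := lintegral_mono fun ω => by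
      simpa [Set.indicator_apply, Finset.sum_boole] using hk ω
    _ = ∑ i ∈ s, μ (t i) :=
      (lintegral_finsetSum' s fun i hi => aemeasurable_one.indicator₀ (ht i hi)).trans
        (Finset.sum_congr rfl fun i hi => lintegral_indicator_one₀ (ht i hi))

def Exchangeable {ι Ω β : Type*} [MeasurableSpace Ω] [MeasurableSpace β]
    (μ : Measure Ω) (X : ι → Ω → β) : Prop :=
  ∀ σ : Equiv.Perm ι, Measure.map (fun ω i => X (σ i) ω) μ = Measure.map (fun ω i => X i ω) μ

namespace Exchangeable

variable {ι Ω β : Type*} [MeasurableSpace Ω] [MeasurableSpace β] {μ : Measure Ω} {X : ι → Ω → β}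

lemma measure_comp_perm_mem (hX : Exchangeable μ X) (hXm : ∀ i, Measurable (X i))
    (σ : Equiv.Perm ι) {A : Set (ι → β)} (hA : MeasurableSet A) :
    μ {ω | (fun i => X (σ i) ω) ∈ A} = μ {ω | (fun i => X i ω) ∈ A} := by
  have h := congrArg (· A) (hX σ)
  rwa [Measure.map_apply (measurable_pi_lambda _ fun i => hXm _) hA,
    Measure.map_apply (measurable_pi_lambda _ hXm) hA] at h

end Exchangeable

section

variable {ι Ω : Type*} [Fintype ι] [DecidableEq ι] [MeasurableSpace Ω] {μ : Measure Ω}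
  {X : ι → Ω → ℝ}

lemma Exchangeable.measure_strictRank_lt_eq (hX : Exchangeable μ X) (hXm : ∀ i, Measurable (X i))
    (k : ℕ) (i j : ι) :
    μ {ω | strictRank (X · ω) i < k} = μ {ω | strictRank (X · ω) j < k} := by
  have h := hX.measure_comp_perm_mem hXm (Equiv.swap i j)
    (A := {x | strictRank x j < k}) (measurable_strictRank j measurableSet_Iio)
  have hswap : ∀ ω, strictRank (fun l => X (Equiv.swap i j l) ω) j = strictRank (X · ω) i :=
    fun ω => (strictRank_comp_perm (X · ω) _ j).trans (by rw [Equiv.swap_apply_right])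
  simpa only [Set.mem_ofPred_eq, hswap] using h

lemma Exchangeable.le_card_mul_measure_strictRank_lt (hX : Exchangeable μ X)
    (hXm : ∀ i, Measurable (X i)) {k : ℕ} (hk₁ : 1 ≤ k) (hk : k ≤ Fintype.card ι) (i : ι) :
    k * μ Set.univ ≤ Fintype.card ι * μ {ω | strictRank (X · ω) i < k} := by
  calc (k : ENNReal) * μ Set.univ ≤ ∑ j, μ {ω | strictRank (X · ω) j < k} :=
        le_sum_measure_of_le_card μ (t := fun j => {ω | strictRank (X · ω) j < k})
          (fun j _ => ((measurable_strictRank j).comp (measurable_pi_lambda _ hXm)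
            measurableSet_Iio).nullMeasurableSet)
          fun ω => le_card_strictRank_lt (X · ω) hk₁ hk
    _ = Fintype.card ι * μ {ω | strictRank (X · ω) i < k} := by
      simp [hX.measure_strictRank_lt_eq hXm k _ i]

end

/-- Marginal coverage guarantee of inductive conformal prediction: if the scores
`s 0, …, s n` (the first `n` being calibration scores, `s (Fin.last n)` the test score)
are exchangeable, and `q̂` is the `⌈(n+1)(1-α)⌉`-th smallest calibration score
(`+∞` if `⌈(n+1)(1-α)⌉ > n`), then `P(s_{n+1} ≤ q̂) ≥ 1 - α`. -/
theorem conformal_marginal_coverage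
    {Ω : Type*} [MeasurableSpace Ω] (μ : Measure Ω) [IsProbabilityMeasure μ]
    (n : ℕ) (α : ℝ) (hα : α ∈ Set.Ioo (0 : ℝ) 1)
    (s : Fin (n + 1) → Ω → ℝ) (hs : ∀ i, Measurable (s i))
    (hexch : ∀ σ : Equiv.Perm (Fin (n + 1)),
      Measure.map (fun ω => fun i => s (σ i) ω) μ
        = Measure.map (fun ω => fun i => s i ω) μ) :
    μ {ω | ((s (Fin.last n) ω : ℝ) : EReal) ≤
        (if ⌈((n : ℝ) + 1) * (1 - α)⌉₊ ≤ n
          then ((kthSmallest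
              (Finset.univ.val.map (fun i : Fin n => s (Fin.castSucc i) ω))
              ⌈((n : ℝ) + 1) * (1 - α)⌉₊ : ℝ) : EReal)
          else (⊤ : EReal))}
      ≥ ENNReal.ofReal (1 - α) := by
  set k := ⌈((n : ℝ) + 1) * (1 - α)⌉₊
  split_ifs with hkn
  · have hk₁ : 1 ≤ k := Nat.ceil_pos.2 (mul_pos (by positivity) (sub_pos.2 hα.2))
    have hevent : {ω | ((s (Fin.last n) ω : ℝ) : EReal) ≤
        ((kthSmallest (univ.val.map fun i : Fin n => s i.castSucc ω) k : ℝ) : EReal)} =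
        {ω | strictRank (s · ω) (Fin.last n) < k} := by
      ext ω
      rw [Set.mem_ofPred_eq, Set.mem_ofPred_eq, EReal.coe_le_coe_iff,
        le_kthSmallest_iff hk₁ (by simpa using hkn), ← countP_map_castSucc_lt_last]
    have hcov := Exchangeable.le_card_mul_measure_strictRank_lt hexch hs hk₁
      (by rw [Fintype.card_fin]; omega) (Fin.last n)
    rw [measure_univ, mul_one, Fintype.card_fin] at hcov
    rw [hevent, ge_iff_le, ← ENNReal.mul_le_mul_iff_right (a := (n + 1 : ℕ)) (by simp) (by simp)]
    refine le_trans ?_ hcov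
    rw [← ENNReal.ofReal_natCast, ← ENNReal.ofReal_natCast k, ← ENNReal.ofReal_mul (by positivity)]
    exact ENNReal.ofReal_le_ofReal (by simpa using Nat.le_ceil (((n : ℝ) + 1) * (1 - α)))
  · simpa using hα.1.le
end

section
/- Let s₁, …, s_{n+1} be i.i.d. real-valued random variables whose common distribution has a continuous cumulative distribution function, and let s_{(k)} denote the k-th smallest value among s₁, …, s_n. Then for every k ∈ {1, …, n}, P(s_{n+1} ≤ s_{(k)}) = k/(n+1). -/
open MeasureTheory ProbabilityTheory ENNReal

/-!
Under the product law `ν^{n+1}` of an atomless `ν`, the coordinates are almost surely distinct,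
and then for each sample exactly `k` of the `n + 1` coordinates have rank `< k`. Permuting
coordinates preserves the product law, so every coordinate has rank `< k` with the same
probability, which is therefore `k / (n + 1)`. Finally `s_{n+1} ≤ s_{(k)}` holds exactly when
fewer than `k` of `s₁, …, sₙ` lie strictly below `s_{n+1}`, that is when `s_{n+1}` has rank `< k`.
-/

open Finset

theorem List.SortedLE.le_getElem_iff_countP_le {α : Type*} [LinearOrder α] {l : List α}
    (hl : l.SortedLE) (t : α) {i : ℕ} (hi : i < l.length) :
    t ≤ l[i] ↔ l.countP (· < t) ≤ i := by
  constructor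
  · intro ht
    have hdrop : (l.drop i).countP (· < t) = 0 := by
      refine List.countP_eq_zero.2 fun a ha => ?_
      obtain ⟨j, hj, rfl⟩ := List.mem_drop_iff_getElem.1 ha
      simpa using ht.trans (hl.getElem_le_getElem_of_le (by omega))
    calc l.countP (· < t)
        = (l.take i).countP (· < t) + (l.drop i).countP (· < t) := by
          rw [← List.countP_append, List.take_append_drop]
      _ ≤ i := by rw [hdrop, add_zero]; exact List.countP_le_length.trans (by simp)
  · contrapose!
    intro hlt
    have htake : (l.take (i + 1)).countP (· < t) = i + 1 := by
      rw [List.countP_eq_length.2 fun a ha => ?_, List.length_take, min_eq_left hi]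
      obtain ⟨j, hj, rfl⟩ := List.mem_take_iff_getElem.1 ha
      simpa using (hl.getElem_le_getElem_of_le (by omega)).trans_lt hlt
    have := (List.take_sublist (i + 1) l).countP_le (p := (· < t))
    omega

theorem le_kthSmallest_iff_countP_lt {m : Multiset ℝ} {k : ℕ} (hk : 1 ≤ k)
    (hkm : k ≤ Multiset.card m) (t : ℝ) :
    t ≤ kthSmallest m k ↔ m.countP (· < t) < k := by
  have hsorted : (m.sort (· ≤ ·)).SortedLE := (Multiset.pairwise_sort _ _).sortedLE
  have hlen : k - 1 < (m.sort (· ≤ ·)).length := by rw [Multiset.length_sort]; omega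
  rw [kthSmallest, List.getD_eq_getElem _ _ hlen, hsorted.le_getElem_iff_countP_le t hlen,
    ← Multiset.coe_countP, Multiset.sort_eq]
  omega

section Rank

variable {ι α : Type*} [Fintype ι] [LinearOrder α]

/-- Ranks count from `0`, unlike the `1`-indexed `kthSmallest`. -/
def rank (x : ι → α) (i : ι) : ℕ := #{j | x j < x i}

theorem rank_lt_rank_iff (x : ι → α) {i j : ι} : rank x i < rank x j ↔ x i < x j := by
  unfold rank
  constructor
  · contrapose!
    exact fun h => card_le_card fun a => by simpa using fun ha => ha.trans_le h
  · intro h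
    refine card_lt_card ⟨fun a => by simpa using fun ha => ha.trans h, fun hsub => ?_⟩
    simpa using hsub (by simpa using h : i ∈ ({a | x a < x j} : Finset ι))

theorem rank_injective {x : ι → α} (hx : Function.Injective x) :
    Function.Injective (rank x) := by
  intro i j hij
  by_contra hne
  rcases (hx.ne hne).lt_or_gt with h | h
  · exact ((rank_lt_rank_iff x).2 h).ne hij
  · exact ((rank_lt_rank_iff x).2 h).ne' hij

theorem rank_lt_card (x : ι → α) (i : ι) : rank x i < Fintype.card ι :=
  card_lt_univ_of_notMem (x := i) (by simp)

theorem image_rank {x : ι → α} (hx : Function.Injective x) :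
    univ.image (rank x) = range (Fintype.card ι) := by
  refine eq_of_subset_of_card_le (fun _ h => ?_) ?_
  · obtain ⟨i, -, rfl⟩ := mem_image.1 h
    exact mem_range.2 (rank_lt_card x i)
  · rw [card_range, card_image_of_injective _ (rank_injective hx), card_univ]

theorem card_rank_lt {x : ι → α} (hx : Function.Injective x) {k : ℕ}
    (hk : k ≤ Fintype.card ι) :
    #{i | rank x i < k} = k := by
  rw [← card_image_of_injective _ (rank_injective hx), ← filter_image (p := (· < k)),
    image_rank hx]
  convert card_range k using 2
  ext v
  simp only [mem_filter, mem_range]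
  omega

theorem rank_comp_perm (x : ι → α) (σ : Equiv.Perm ι) (i : ι) :
    rank (x ∘ σ) i = rank x (σ i) :=
  card_equiv σ (by simp)

end Rank

theorem rank_last_eq_countP {α : Type*} [LinearOrder α] {N : ℕ} (x : Fin (N + 1) → α) :
    rank x (Fin.last N) =
      (univ.val.map fun j : Fin N => x j.castSucc).countP (· < x (Fin.last N)) := by
  rw [Multiset.countP_map, ← filter_val, ← card_def, rank, card_filter, card_filter,
    Fin.sum_univ_castSucc]
  simp

theorem le_kthSmallest_iff_rank_last_lt {N k : ℕ} (hk : 1 ≤ k) (hkN : k ≤ N)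
    (x : Fin (N + 1) → ℝ) :
    x (Fin.last N) ≤ kthSmallest (univ.val.map fun j : Fin N => x j.castSucc) k ↔
      rank x (Fin.last N) < k := by
  rw [le_kthSmallest_iff_countP_lt hk (by simpa using hkN), rank_last_eq_countP]

theorem ProbabilityTheory.IndepFun.ae_ne {Ω α : Type*} [MeasurableSpace Ω] [MeasurableSpace α]
    [MeasurableEq α] {μ : Measure Ω} [IsFiniteMeasure μ] {X Y : Ω → α}
    (hXY : IndepFun X Y μ) (hX : AEMeasurable X μ) (hY : AEMeasurable Y μ)
    [NullSingletonClass (μ.map X)] :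
    ∀ᵐ ω ∂μ, X ω ≠ Y ω := by
  rw [ae_iff]
  simp only [ne_eq, not_not]
  change μ ((fun ω => (X ω, Y ω)) ⁻¹' Set.diagonal α) = 0
  rw [← Measure.map_apply_of_aemeasurable (hX.prodMk hY) measurableSet_diagonal,
    (indepFun_iff_map_prod_eq_prod_map_map hX hY).1 hXY,
    Measure.prod_apply_symm measurableSet_diagonal]
  have hfiber : ∀ y, (fun x => (x, y)) ⁻¹' Set.diagonal α = {y} := fun y => by ext; simp
  simp [hfiber]

section
variable {ι : Type*} [Fintype ι]

theorem ae_injective_pi {α : Type*} [MeasurableSpace α] [MeasurableEq α] (ν : Measure α)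
    [IsProbabilityMeasure ν] [NullSingletonClass ν] :
    ∀ᵐ x ∂(Measure.pi fun _ : ι => ν), Function.Injective x := by
  have hindep : iIndepFun (fun i (x : ι → α) => x i) (Measure.pi fun _ => ν) :=
    iIndepFun_pi (X := fun _ => id) fun _ => aemeasurable_id
  have hne (i j : ι) (hij : i ≠ j) : ∀ᵐ x ∂(Measure.pi fun _ : ι => ν), x i ≠ x j := by
    have : NullSingletonClass ((Measure.pi fun _ : ι => ν).map (Function.eval i)) := by
      rw [(measurePreserving_eval _ i).map_eq]; infer_instance
    exact (hindep.indepFun hij).ae_ne (measurable_pi_apply i).aemeasurable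
      (measurable_pi_apply j).aemeasurable
  have hall : ∀ᵐ x ∂(Measure.pi fun _ : ι => ν), ∀ i j, i ≠ j → x i ≠ x j :=
    ae_all_iff.2 fun i => ae_all_iff.2 fun j => ae_all_iff.2 (hne i j)
  filter_upwards [hall] with x hx using fun i j => not_imp_not.1 (hx i j)

theorem measurableSet_rank_lt (i : ι) (k : ℕ) : MeasurableSet {x : ι → ℝ | rank x i < k} := by
  have : Measurable fun x : ι → ℝ => rank x i := by
    simp only [rank, card_filter]
    exact measurable_sum _ fun j _ => Measurable.ite
      (measurableSet_lt (measurable_pi_apply j) (measurable_pi_apply i)) measurable_const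
      measurable_const
  exact this measurableSet_Iio

theorem measurePreserving_comp_perm {α : Type*} [MeasurableSpace α] (ν : Measure α)
    [SigmaFinite ν] (σ : Equiv.Perm ι) :
    MeasurePreserving (fun x : ι → α => x ∘ σ) (Measure.pi fun _ => ν) (Measure.pi fun _ => ν) :=
  (measurePreserving_piCongrLeft (fun _ => ν) σ).symm _

theorem measure_pi_rank_lt_congr (ν : Measure ℝ) [SigmaFinite ν] (i j : ι) (k : ℕ) :
    Measure.pi (fun _ => ν) {x | rank x i < k} = Measure.pi (fun _ => ν) {x | rank x j < k} := by
  classical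
  have hswap :
      (fun x : ι → ℝ => x ∘ Equiv.swap i j) ⁻¹' {x | rank x j < k} = {x | rank x i < k} := by
    ext x
    simp [rank_comp_perm]
  rw [← hswap, (measurePreserving_comp_perm ν _).measure_preimage
    (measurableSet_rank_lt j k).nullMeasurableSet]

theorem sum_measure_rank_lt (P : Measure (ι → ℝ)) [IsProbabilityMeasure P]
    (hP : ∀ᵐ x ∂P, Function.Injective x) {k : ℕ} (hk : k ≤ Fintype.card ι) :
    ∑ i, P {x | rank x i < k} = k := by
  have hC := fun i => measurableSet_rank_lt (ι := ι) i k
  calc ∑ i, P {x | rank x i < k}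
      = ∑ i, ∫⁻ x, {x | rank x i < k}.indicator 1 x ∂P := by
        simp_rw [lintegral_indicator_one (hC _)]
    _ = ∫⁻ x, ∑ i, {x | rank x i < k}.indicator 1 x ∂P :=
        (lintegral_finsetSum _ fun i _ => measurable_one.indicator (hC i)).symm
    _ = ∫⁻ _, (k : ℝ≥0∞) ∂P := lintegral_congr_ae <| hP.mono fun x hx => by
        simp [Set.indicator_apply, sum_boole, card_rank_lt hx hk]
    _ = k := by simp

theorem measure_pi_rank_lt (ν : Measure ℝ) [IsProbabilityMeasure ν] [NullSingletonClass ν]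
    (i : ι) {k : ℕ} (hk : k ≤ Fintype.card ι) :
    Measure.pi (fun _ => ν) {x | rank x i < k} = k / Fintype.card ι := by
  have hsum := sum_measure_rank_lt _ (ae_injective_pi ν) hk
  simp_rw [measure_pi_rank_lt_congr ν _ i, sum_const, card_univ, nsmul_eq_mul] at hsum
  have : Nonempty ι := ⟨i⟩
  rw [ENNReal.eq_div_iff (by simp) (by simp), hsum]

end

theorem prob_le_order_statistic_general
    {Ω : Type*} [MeasurableSpace Ω] (μ : Measure Ω) [IsProbabilityMeasure μ]
    (n : ℕ)
    (s : Fin (n + 1) → Ω → ℝ) (hs : ∀ i, Measurable (s i))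
    (ν : Measure ℝ) [IsProbabilityMeasure ν]
    (hindep : iIndepFun s μ)
    (hident : ∀ i, Measure.map (s i) μ = ν)
    (hcont : ∀ x : ℝ, ν {x} = 0) :
    ∀ k : ℕ, 1 ≤ k → k ≤ n →
      μ {ω | s (Fin.last n) ω
          ≤ kthSmallest (Finset.univ.val.map (fun j : Fin n => s (Fin.castSucc j) ω)) k}
        = (k : ℝ≥0∞) / ((n : ℝ≥0∞) + 1) := by
  intro k hk hkn
  have : NullSingletonClass ν := ⟨hcont⟩
  have hlaw : μ.map (fun ω i => s i ω) = Measure.pi fun _ => ν := by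
    simp_rw [hindep.map_fun_eq_pi_map fun i => (hs i).aemeasurable, hident]
  have hevent : {ω | s (Fin.last n) ω
      ≤ kthSmallest (Finset.univ.val.map (fun j : Fin n => s (Fin.castSucc j) ω)) k}
      = (fun ω i => s i ω) ⁻¹' {x | rank x (Fin.last n) < k} := by
    ext ω
    exact le_kthSmallest_iff_rank_last_lt hk hkn fun i => s i ω
  rw [hevent, ← Measure.map_apply (measurable_pi_lambda _ hs) (measurableSet_rank_lt _ _), hlaw,
    measure_pi_rank_lt ν _ (by simp; omega)]
  simp

/-- If `s 0, …, s n` are i.i.d. with a common atomless distribution (continuous CDF), and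
`s_{(k)}` denotes the `k`-th smallest among the first `n` variables, then for every
`k ∈ {1,…,n}`, `P(s_{n+1} ≤ s_{(k)}) = k / (n+1)`. -/
theorem prob_le_order_statistic
    {Ω : Type*} [MeasurableSpace Ω] (μ : Measure Ω) [IsProbabilityMeasure μ]
    (n : ℕ) (hn : 1 ≤ n)
    (s : Fin (n + 1) → Ω → ℝ) (hs : ∀ i, Measurable (s i))
    (ν : Measure ℝ) [IsProbabilityMeasure ν]
    (hindep : iIndepFun s μ)
    (hident : ∀ i, Measure.map (s i) μ = ν)
    (hcont : ∀ x : ℝ, ν {x} = 0) :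
    ∀ k : ℕ, 1 ≤ k → k ≤ n →
      μ {ω | s (Fin.last n) ω
          ≤ kthSmallest (Finset.univ.val.map (fun j : Fin n => s (Fin.castSucc j) ω)) k}
        = (k : ℝ≥0∞) / ((n : ℝ≥0∞) + 1) :=
  prob_le_order_statistic_general μ n s hs ν hindep hident hcont
end
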